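/- Let (Y,μ) be a finite measure space, let 0 < δ < 1, and let f : Y → ℝ be a measurable function such that for all real nonzero λ one has |∫_Y e^{iλ f(y)} dμ(y)| ≤ A|λ|^{-δ}. Then for each c ∈ ℝ and each ε > 0, μ({y ∈ Y : |f(y) − c| ≤ ε}) ≤ C_δ A ε^{δ}, where the constant C_δ depends only on δ. -/

import Mathlib

/-!
Put `S(y) = ∑_{j<N} e^{i j s g(y)}` with `s = 1/(Nε)`. On `{|g| ≤ ε}` every phase `j s g(y)` lies
in `[-1, 1]`, so `Re S ≥ N/2` there and Chebyshev gives `(N²/4) μ{|g| ≤ ε} ≤ ∫ |S|²`. Expanding,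
`∫ |S|² = ∑_{j,l} ∫ e^{i (j - l) s g}`: the `N` diagonal terms contribute `N μ(Y)`, and the decay
hypothesis bounds the off-diagonal ones by `A s^{-δ} ∑_{j ≠ l} |j - l|^{-δ} ≤ 2 A ε^δ N² / (1 - δ)`.
Dividing by `N²/4` and letting `N → ∞` gives the bound with `C_δ = 8 / (1 - δ)`.
-/

open MeasureTheory Real Filter Topology Finset
open Complex (I)
open scoped Complex

lemma sum_range_add_one_rpow_neg_le {δ : ℝ} (hδ0 : 0 ≤ δ) (hδ1 : δ < 1) (m : ℕ) :
    ∑ k ∈ range m, ((k : ℝ) + 1) ^ (-δ) ≤ (m : ℝ) ^ (1 - δ) / (1 - δ) := by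
  have h1δ : 0 < 1 - δ := by linarith
  cases m with
  | zero => simp [Real.zero_rpow h1δ.ne']
  | succ m =>
    -- The comparison integral starts at `1`, as `x ^ (-δ)` is `0` (not `+∞`) at `x = 0`.
    have hanti : AntitoneOn (fun x : ℝ => x ^ (-δ)) (Set.Icc 1 (1 + m)) := fun x hx y _ hxy =>
      Real.rpow_le_rpow_of_nonpos (one_pos.trans_le hx.1) hxy (by linarith)
    have htail := hanti.sum_le_integral
    rw [integral_rpow (Or.inl (by linarith)), Real.one_rpow, neg_add_eq_sub] at htail
    have hδdiv : 0 ≤ δ / (1 - δ) := div_nonneg hδ0 h1δ.le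
    calc ∑ k ∈ range (m + 1), ((k : ℝ) + 1) ^ (-δ)
        = ∑ i ∈ range m, (1 + ((i + 1 : ℕ) : ℝ)) ^ (-δ) + 1 := by
          simp [sum_range_succ', add_comm]
      _ ≤ ((1 + m) ^ (1 - δ) - 1) / (1 - δ) + 1 := by gcongr
      _ = ((m + 1 : ℕ) : ℝ) ^ (1 - δ) / (1 - δ) - δ / (1 - δ) := by
          push_cast; rw [add_comm (m : ℝ)]; field_simp; ring
      _ ≤ ((m + 1 : ℕ) : ℝ) ^ (1 - δ) / (1 - δ) := by linarith

lemma sum_erase_abs_sub_rpow_neg_le {δ : ℝ} (hδ0 : 0 ≤ δ) (hδ1 : δ < 1) {N j : ℕ}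
    (hj : j < N) :
    ∑ l ∈ (range N).erase j, |(j : ℝ) - l| ^ (-δ) ≤ 2 * ((N : ℝ) ^ (1 - δ) / (1 - δ)) := by
  have hpartial : ∀ m ≤ N,
      ∑ k ∈ range m, ((k : ℝ) + 1) ^ (-δ) ≤ (N : ℝ) ^ (1 - δ) / (1 - δ) :=
    fun m hm => (sum_range_add_one_rpow_neg_le hδ0 hδ1 m).trans (by gcongr)
  have hsplit : (range N).erase j = range j ∪ Ico (j + 1) N := by
    ext l; simp only [mem_erase, mem_range, mem_union, mem_Ico]; omega
  have hdisj : Disjoint (range j) (Ico (j + 1) N) := by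
    simp only [disjoint_left, mem_range, mem_Ico]; omega
  have hbelow : ∑ l ∈ range j, |(j : ℝ) - l| ^ (-δ) = ∑ k ∈ range j, ((k : ℝ) + 1) ^ (-δ) := by
    rw [← sum_range_reflect]
    refine sum_congr rfl fun k hk => ?_
    rw [mem_range] at hk
    rw [Nat.cast_sub (by omega), Nat.cast_sub (by omega), abs_of_nonneg (by push_cast; linarith)]
    push_cast; ring_nf
  have habove : ∑ l ∈ Ico (j + 1) N, |(j : ℝ) - l| ^ (-δ)
      = ∑ k ∈ range (N - (j + 1)), ((k : ℝ) + 1) ^ (-δ) := by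
    rw [sum_Ico_eq_sum_range]
    refine sum_congr rfl fun k _ => ?_
    rw [abs_sub_comm, abs_of_nonneg (by push_cast; linarith)]
    push_cast; ring_nf
  rw [hsplit, sum_union hdisj, hbelow, habove, two_mul]
  exact add_le_add (hpartial j hj.le) (hpartial _ (by omega))

lemma norm_exp_I_mul_mul (t x : ℝ) : ‖cexp (I * t * x)‖ = 1 := by
  rw [mul_assoc, ← Complex.ofReal_mul, Complex.norm_exp_I_mul_ofReal]

lemma half_le_re_sum_exp_I_mul {N : ℕ} {s x : ℝ} (hsx : N * |s * x| ≤ 1) :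
    (N : ℝ) / 2 ≤ (∑ j ∈ range N, cexp (I * ↑(j * s) * x)).re := by
  have hcos : ∀ j ∈ range N, 1 / 2 ≤ (cexp (I * ↑(j * s) * x)).re := by
    intro j hj
    have hjN : (j : ℝ) ≤ N := by exact_mod_cast (mem_range.1 hj).le
    have harg : |j * s * x| ≤ 1 := by
      rw [mul_assoc, abs_mul, Nat.abs_cast]
      exact (mul_le_mul_of_nonneg_right hjN (abs_nonneg _)).trans hsx
    rw [mul_assoc, ← Complex.ofReal_mul, mul_comm, Complex.exp_ofReal_mul_I_re]
    nlinarith [Real.one_sub_sq_div_two_le_cos (x := j * s * x), sq_abs (j * s * x),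
      abs_nonneg (j * s * x)]
  calc (N : ℝ) / 2 = ∑ _j ∈ range N, (1 / 2 : ℝ) := by simp; ring
    _ ≤ _ := by rw [Complex.re_sum]; exact sum_le_sum hcos

def HasFourierDecay {Y : Type*} [MeasurableSpace Y] (μ : Measure Y) (g : Y → ℝ) (A δ : ℝ) :
    Prop :=
  ∀ lam : ℝ, lam ≠ 0 → ‖∫ y, cexp (I * lam * g y) ∂μ‖ ≤ A * |lam| ^ (-δ)

namespace HasFourierDecay

variable {Y : Type*} [MeasurableSpace Y] {μ : Measure Y} {g : Y → ℝ} {A δ : ℝ}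

lemma sub_const (hb : HasFourierDecay μ g A δ) (c : ℝ) :
    HasFourierDecay μ (fun y => g y - c) A δ := by
  intro t ht
  have hsplit : ∀ y, cexp (I * t * ↑(g y - c)) = cexp (I * ↑(-t * c)) * cexp (I * t * g y) := by
    intro y
    rw [← Complex.exp_add]
    push_cast
    ring_nf
  simp_rw [hsplit, integral_const_mul, norm_mul, Complex.norm_exp_I_mul_ofReal, one_mul]
  exact hb t ht

lemma sum_norm_integral_exp_le (hb : HasFourierDecay μ g A δ) (hA : 0 ≤ A) (hδ0 : 0 ≤ δ)
    (hδ1 : δ < 1) {s : ℝ} (hs : 0 < s) {N j : ℕ} (hj : j < N) :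
    ∑ l ∈ range N, ‖∫ y, cexp (I * ↑(j * s - l * s) * g y) ∂μ‖
      ≤ μ.real Set.univ + A * s ^ (-δ) * (2 * ((N : ℝ) ^ (1 - δ) / (1 - δ))) := by
  rw [← add_sum_erase _ _ (mem_range.2 hj)]
  have hdiag : ‖∫ y, cexp (I * ↑(j * s - j * s) * g y) ∂μ‖ = μ.real Set.univ := by simp
  have hoff : ∀ l ∈ (range N).erase j,
      ‖∫ y, cexp (I * ↑(j * s - l * s) * g y) ∂μ‖ ≤ A * s ^ (-δ) * |(j : ℝ) - l| ^ (-δ) := by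
    intro l hl
    have hlj : (j : ℝ) - l ≠ 0 := sub_ne_zero.2 (by exact_mod_cast (ne_of_mem_erase hl).symm)
    calc _ ≤ A * |j * s - l * s| ^ (-δ) := hb _ (by rw [← sub_mul]; exact mul_ne_zero hlj hs.ne')
      _ = A * s ^ (-δ) * |(j : ℝ) - l| ^ (-δ) := by
        rw [← sub_mul, abs_mul, abs_of_pos hs, Real.mul_rpow (abs_nonneg _) hs.le]; ring
  rw [hdiag]
  gcongr
  calc _ ≤ ∑ l ∈ (range N).erase j, A * s ^ (-δ) * |(j : ℝ) - l| ^ (-δ) := sum_le_sum hoff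
    _ ≤ _ := by
        rw [← mul_sum]
        gcongr
        exact sum_erase_abs_sub_rpow_neg_le hδ0 hδ1 hj

end HasFourierDecay

section FiniteMeasure

variable {Y : Type*} [MeasurableSpace Y] (μ : Measure Y) [IsFiniteMeasure μ] {g : Y → ℝ}

lemma integrable_exp_I_mul_mul (hg : AEMeasurable g μ) (t : ℝ) :
    Integrable (fun y => cexp (I * t * g y)) μ := by
  refine Integrable.of_bound ?_ 1 (Eventually.of_forall fun y => (norm_exp_I_mul_mul t _).le)
  exact (Complex.measurable_exp.comp_aemeasurable (aemeasurable_const.mul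
    (Complex.measurable_ofReal.comp_aemeasurable hg))).aestronglyMeasurable

lemma integrable_norm_sum_exp_sq (hg : AEMeasurable g μ) {ι : Type*} (s : Finset ι)
    (t : ι → ℝ) :
    Integrable (fun y => ‖∑ j ∈ s, cexp (I * t j * g y)‖ ^ 2) μ := by
  refine Integrable.of_bound ?_ ((#s : ℝ) ^ 2) (Eventually.of_forall fun y => ?_)
  · exact (aestronglyMeasurable_fun_sum _ fun j _ =>
      (integrable_exp_I_mul_mul μ hg (t j)).aestronglyMeasurable).norm.pow 2
  · have hnorm : ‖∑ j ∈ s, cexp (I * t j * g y)‖ ≤ #s :=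
      (norm_sum_le _ _).trans_eq (by simp [norm_exp_I_mul_mul])
    rw [Real.norm_eq_abs, abs_pow, abs_norm]
    gcongr

lemma integral_norm_sum_exp_sq_le (hg : AEMeasurable g μ) {ι : Type*} (s : Finset ι)
    (t : ι → ℝ) :
    ∫ y, ‖∑ j ∈ s, cexp (I * t j * g y)‖ ^ 2 ∂μ
      ≤ ∑ j ∈ s, ∑ l ∈ s, ‖∫ y, cexp (I * ↑(t j - t l) * g y) ∂μ‖ := by
  have hexpand : ∀ y, ((‖∑ j ∈ s, cexp (I * t j * g y)‖ ^ 2 : ℝ) : ℂ)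
      = ∑ j ∈ s, ∑ l ∈ s, cexp (I * ↑(t j - t l) * g y) := by
    intro y
    rw [Complex.ofReal_pow, ← Complex.mul_conj', map_sum, sum_mul_sum]
    refine sum_congr rfl fun j _ => sum_congr rfl fun l _ => ?_
    rw [← Complex.exp_conj, ← Complex.exp_add]
    simp only [map_mul, Complex.conj_I, Complex.conj_ofReal]
    push_cast
    ring_nf
  have hint : ∀ j ∈ s, Integrable (fun y => ∑ l ∈ s, cexp (I * ↑(t j - t l) * g y)) μ :=
    fun j _ => integrable_finsetSum _ fun l _ => integrable_exp_I_mul_mul μ hg _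
  calc ∫ y, ‖∑ j ∈ s, cexp (I * t j * g y)‖ ^ 2 ∂μ
      = (∑ j ∈ s, ∑ l ∈ s, ∫ y, cexp (I * ↑(t j - t l) * g y) ∂μ).re := by
        rw [← Complex.ofReal_re (∫ y, _ ∂μ), ← integral_complex_ofReal]
        simp_rw [hexpand]
        rw [integral_finsetSum _ hint]
        simp_rw [integral_finsetSum _ fun l _ => integrable_exp_I_mul_mul μ hg _]
    _ ≤ ‖∑ j ∈ s, ∑ l ∈ s, ∫ y, cexp (I * ↑(t j - t l) * g y) ∂μ‖ := Complex.re_le_norm _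
    _ ≤ ∑ j ∈ s, ∑ l ∈ s, ‖∫ y, cexp (I * ↑(t j - t l) * g y) ∂μ‖ :=
        (norm_sum_le _ _).trans (sum_le_sum fun j _ => norm_sum_le _ _)

variable {μ} {A δ : ℝ}

lemma HasFourierDecay.measureReal_abs_le_le_div_add (hb : HasFourierDecay μ g A δ)
    (hg : AEMeasurable g μ) (hA : 0 ≤ A) (hδ0 : 0 ≤ δ) (hδ1 : δ < 1) {ε : ℝ} (hε : 0 < ε)
    {N : ℕ} (hN : 0 < N) :
    μ.real {y | |g y| ≤ ε} ≤ 4 * μ.real Set.univ / N + 8 / (1 - δ) * A * ε ^ δ := by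
  have hNpos : (0 : ℝ) < N := by exact_mod_cast hN
  set s : ℝ := ((N : ℝ) * ε)⁻¹ with hs_def
  have hs : 0 < s := by positivity
  set S : Y → ℂ := fun y => ∑ j ∈ range N, cexp (I * ↑(j * s) * g y)
  have hlevel : {y | |g y| ≤ ε} ⊆ {y | (N : ℝ) ^ 2 / 4 ≤ ‖S y‖ ^ 2} := by
    intro y (hy : |g y| ≤ ε)
    have hsy : N * |s * g y| ≤ 1 :=
      calc N * |s * g y| = N * s * |g y| := by rw [abs_mul, abs_of_pos hs, mul_assoc]
        _ ≤ N * s * ε := by gcongr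
        _ = 1 := by rw [hs_def]; field_simp
    have hre := (half_le_re_sum_exp_I_mul hsy).trans (Complex.re_le_norm (S y))
    show (N : ℝ) ^ 2 / 4 ≤ ‖S y‖ ^ 2
    nlinarith
  have hrow : ∀ j ∈ range N, ∑ l ∈ range N, ‖∫ y, cexp (I * ↑(j * s - l * s) * g y) ∂μ‖
      ≤ μ.real Set.univ + 2 * A * ε ^ δ * N / (1 - δ) := by
    intro j hj
    have hpow : s ^ (-δ) * (N : ℝ) ^ (1 - δ) = ε ^ δ * N := by
      rw [hs_def, Real.inv_rpow (by positivity), Real.rpow_neg (by positivity), inv_inv,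
        Real.mul_rpow hNpos.le hε.le, mul_comm _ (ε ^ δ), mul_assoc, ← Real.rpow_add hNpos,
        add_sub_cancel, Real.rpow_one]
    refine (hb.sum_norm_integral_exp_le hA hδ0 hδ1 hs (mem_range.1 hj)).trans_eq ?_
    linear_combination (2 * A / (1 - δ)) * hpow
  have hsq : (N : ℝ) ^ 2 / 4 * μ.real {y | |g y| ≤ ε}
      ≤ N * (μ.real Set.univ + 2 * A * ε ^ δ * N / (1 - δ)) :=
    calc (N : ℝ) ^ 2 / 4 * μ.real {y | |g y| ≤ ε}
        ≤ (N : ℝ) ^ 2 / 4 * μ.real {y | (N : ℝ) ^ 2 / 4 ≤ ‖S y‖ ^ 2} :=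
          mul_le_mul_of_nonneg_left (measureReal_mono hlevel) (by positivity)
      _ ≤ ∫ y, ‖S y‖ ^ 2 ∂μ :=
          mul_meas_ge_le_integral_of_nonneg (Eventually.of_forall fun y => by positivity)
            (integrable_norm_sum_exp_sq μ hg _ _) _
      _ ≤ ∑ j ∈ range N, ∑ l ∈ range N, ‖∫ y, cexp (I * ↑(j * s - l * s) * g y) ∂μ‖ :=
          integral_norm_sum_exp_sq_le μ hg _ _
      _ ≤ N * (μ.real Set.univ + 2 * A * ε ^ δ * N / (1 - δ)) :=
          (sum_le_sum hrow).trans_eq (by rw [sum_const, card_range, nsmul_eq_mul])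
  refine le_of_mul_le_mul_left (hsq.trans_eq ?_) (by positivity : (0 : ℝ) < N ^ 2 / 4)
  field_simp
  ring

lemma HasFourierDecay.measureReal_abs_le_le (hb : HasFourierDecay μ g A δ)
    (hg : AEMeasurable g μ) (hA : 0 ≤ A) (hδ0 : 0 ≤ δ) (hδ1 : δ < 1) {ε : ℝ} (hε : 0 < ε) :
    μ.real {y | |g y| ≤ ε} ≤ 8 / (1 - δ) * A * ε ^ δ := by
  have hlim : Tendsto (fun N : ℕ => 4 * μ.real Set.univ / N + 8 / (1 - δ) * A * ε ^ δ) atTop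
      (𝓝 (8 / (1 - δ) * A * ε ^ δ)) := by
    simpa using (tendsto_const_div_atTop_nhds_zero_nat (4 * μ.real Set.univ)).add_const
      (8 / (1 - δ) * A * ε ^ δ)
  exact ge_of_tendsto hlim <| (eventually_gt_atTop 0).mono fun N hN =>
    hb.measureReal_abs_le_le_div_add hg hA hδ0 hδ1 hε hN

end FiniteMeasure

/-- **Lemma 1.5** (Carbery–Christ–Wright / Green formulation). If `(Y,μ)` is a finite measure
space, `0 < δ < 1`, and `f : Y → ℝ` is measurable with
`|∫_Y e^{iλ f(y)} dμ(y)| ≤ A|λ|^{-δ}` for all nonzero real `λ`, then for every `c ∈ ℝ` and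
`ε > 0` one has `μ({y : |f(y) - c| ≤ ε}) ≤ C_δ A ε^δ`, where `C_δ` depends only on `δ`. -/
theorem lemma_1_5 (δ : ℝ) (hδ0 : 0 < δ) (hδ1 : δ < 1) :
    ∃ Cδ : ℝ, 0 < Cδ ∧
      ∀ (Y : Type) (_ : MeasurableSpace Y) (μ : Measure Y), IsFiniteMeasure μ →
        ∀ (f : Y → ℝ), Measurable f →
          ∀ (A : ℝ), 0 < A →
            (∀ lam : ℝ, lam ≠ 0 →
              ‖∫ y, Complex.exp (Complex.I * (lam : ℂ) * (f y : ℂ)) ∂μ‖ ≤ A * |lam| ^ (-δ)) →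
            ∀ (c : ℝ) (ε : ℝ), 0 < ε →
              μ {y | |f y - c| ≤ ε} ≤ ENNReal.ofReal (Cδ * A * ε ^ δ) := by
  refine ⟨8 / (1 - δ), div_pos (by norm_num) (by linarith), ?_⟩
  intro Y _ μ _ f hf A hA hb c ε hε
  have hdecay : HasFourierDecay μ (fun y => f y - c) A δ := HasFourierDecay.sub_const hb c
  rw [← ofReal_measureReal]
  exact ENNReal.ofReal_le_ofReal
    (hdecay.measureReal_abs_le_le (hf.sub_const c).aemeasurable hA.le hδ0.le hδ1 hε)
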